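/- arXiv:0905.1964 — 2 statements merged into one kernel-verified Lean document; each statement's English description precedes it below -/
import Mathlib

section
/- Let (R₁,R₂) satisfy the Gaussian fading MAC constraints R₁ ≤ E[C₁], R₂ ≤ E[C₂], R₁+R₂ ≤ E[log₂√(1+SNR₁+SNR₂)], where Cₖ = (1/2)log₂(1+SNRₖ) and SNR₂ ≤ SNR₁ pointwise with SNRₖ ≥ 1. Let Mₖ = ⌈Cₖ⌉ pointwise. Then the rate pair (R₁',R₂') = ((R₁−1)⁺,(R₂−3/2)⁺) satisfies the quasi-deterministic MAC constraints R₁' ≤ E[M₁], R₂' ≤ E[M₂], R₁'+R₂' ≤ E[max(M₁,M₂)]; in particular the quasi-deterministic MAC region is within 1.5 bits per user of the Gaussian fading MAC region. -/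
open Finset

noncomputable def probOf {Ω α : Type} [Fintype Ω] [DecidableEq α]
    (p : Ω → ℝ) (Z : Ω → α) (a : α) : ℝ :=
  ∑ ω ∈ Finset.univ.filter (fun ω => Z ω = a), p ω

noncomputable def entH {Ω α : Type} [Fintype Ω] [DecidableEq α]
    (p : Ω → ℝ) (Z : Ω → α) : ℝ :=
  -∑ a ∈ Finset.univ.image Z, probOf p Z a * Real.logb 2 (probOf p Z a)

noncomputable def condH {Ω α β : Type} [Fintype Ω] [DecidableEq α] [DecidableEq β]
    (p : Ω → ℝ) (Y : Ω → α) (M : Ω → β) : ℝ :=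
  entH p (fun ω => (Y ω, M ω)) - entH p M

noncomputable def mutI {Ω α β : Type} [Fintype Ω] [DecidableEq α] [DecidableEq β]
    (p : Ω → ℝ) (X : Ω → α) (Y : Ω → β) : ℝ :=
  entH p X + entH p Y - entH p (fun ω => (X ω, Y ω))

noncomputable def condMI {Ω α β γ : Type} [Fintype Ω] [DecidableEq α] [DecidableEq β] [DecidableEq γ]
    (p : Ω → ℝ) (X : Ω → α) (Y : Ω → β) (Z : Ω → γ) : ℝ :=
  entH p (fun ω => (X ω, Z ω)) + entH p (fun ω => (Y ω, Z ω))
    - entH p (fun ω => (X ω, Y ω, Z ω)) - entH p Z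

noncomputable def expec {Ω : Type} [Fintype Ω] (p : Ω → ℝ) (f : Ω → ℝ) : ℝ :=
  ∑ ω, p ω * f ω

def IndepRV {Ω α β : Type} [Fintype Ω] [DecidableEq α] [DecidableEq β]
    (p : Ω → ℝ) (X : Ω → α) (Y : Ω → β) : Prop :=
  ∀ a b, probOf p (fun ω => (X ω, Y ω)) (a, b) = probOf p X a * probOf p Y b

def trunc (n : ℕ) (x : Fin n → Bool) (m : ℕ) : Fin n → Bool :=
  fun i => if i.val < m then x i else false

def bitOf (n : ℕ) (x : Fin n → Bool) (j : ℕ) : Bool :=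
  if h : j - 1 < n then x ⟨j - 1, h⟩ else false

theorem stmt6 (Ω : Type) [Fintype Ω] (p : Ω → ℝ)
    (hp : ∀ ω, 0 ≤ p ω) (hp1 : ∑ ω, p ω = 1)
    (SNR₁ SNR₂ : Ω → ℝ)
    (h1 : ∀ ω, 1 ≤ SNR₁ ω) (h2 : ∀ ω, 1 ≤ SNR₂ ω)
    (h21 : ∀ ω, SNR₂ ω ≤ SNR₁ ω)
    (M₁ M₂ : Ω → ℕ)
    (hM₁ : ∀ ω, M₁ ω = ⌈(1 / 2 : ℝ) * Real.logb 2 (1 + SNR₁ ω)⌉₊)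
    (hM₂ : ∀ ω, M₂ ω = ⌈(1 / 2 : ℝ) * Real.logb 2 (1 + SNR₂ ω)⌉₊)
    (R₁ R₂ : ℝ)
    (hR₁ : R₁ ≤ expec p (fun ω => (1 / 2 : ℝ) * Real.logb 2 (1 + SNR₁ ω)))
    (hR₂ : R₂ ≤ expec p (fun ω => (1 / 2 : ℝ) * Real.logb 2 (1 + SNR₂ ω)))
    (hRs : R₁ + R₂ ≤ expec p (fun ω => Real.logb 2 (Real.sqrt (1 + SNR₁ ω + SNR₂ ω)))) :
    max (R₁ - 1) 0 ≤ expec p (fun ω => (M₁ ω : ℝ)) ∧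
    max (R₂ - 3 / 2) 0 ≤ expec p (fun ω => (M₂ ω : ℝ)) ∧
    max (R₁ - 1) 0 + max (R₂ - 3 / 2) 0 ≤
      expec p (fun ω => ((max (M₁ ω) (M₂ ω) : ℕ) : ℝ)) := by
  -- abbreviations
  set C₁ : Ω → ℝ := fun ω => (1 / 2 : ℝ) * Real.logb 2 (1 + SNR₁ ω) with hC₁def
  set C₂ : Ω → ℝ := fun ω => (1 / 2 : ℝ) * Real.logb 2 (1 + SNR₂ ω) with hC₂def
  have hCle : ∀ ω, C₁ ω ≤ (M₁ ω : ℝ) := by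
    intro ω; rw [hM₁ ω]; exact Nat.le_ceil _
  have hCle2 : ∀ ω, C₂ ω ≤ (M₂ ω : ℝ) := by
    intro ω; rw [hM₂ ω]; exact Nat.le_ceil _
  have hC21 : ∀ ω, C₂ ω ≤ C₁ ω := by
    intro ω
    have := h2 ω
    have h' : Real.logb 2 (1 + SNR₂ ω) ≤ Real.logb 2 (1 + SNR₁ ω) :=
      (Real.logb_le_logb one_lt_two (by linarith [h2 ω]) (by linarith [h1 ω])).mpr (by linarith [h21 ω])
    simp only [hC₁def, hC₂def]
    linarith
  have hM21 : ∀ ω, M₂ ω ≤ M₁ ω := by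
    intro ω; rw [hM₁ ω, hM₂ ω]; exact Nat.ceil_le_ceil (hC21 ω)
  have emono : ∀ f g : Ω → ℝ, (∀ ω, f ω ≤ g ω) → expec p f ≤ expec p g := by
    intro f g h
    exact Finset.sum_le_sum fun ω _ => mul_le_mul_of_nonneg_left (h ω) (hp ω)
  have hE1 : expec p C₁ ≤ expec p (fun ω => (M₁ ω : ℝ)) := emono _ _ hCle
  have hE2 : expec p C₂ ≤ expec p (fun ω => (M₂ ω : ℝ)) := emono _ _ hCle2
  have hE21 : expec p C₂ ≤ expec p C₁ := emono _ _ hC21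
  have nn1 : 0 ≤ expec p (fun ω => (M₁ ω : ℝ)) :=
    Finset.sum_nonneg fun ω _ => mul_nonneg (hp ω) (Nat.cast_nonneg _)
  have nn2 : 0 ≤ expec p (fun ω => (M₂ ω : ℝ)) :=
    Finset.sum_nonneg fun ω _ => mul_nonneg (hp ω) (Nat.cast_nonneg _)
  -- pointwise sum bound
  have hsumpt : ∀ ω, Real.logb 2 (Real.sqrt (1 + SNR₁ ω + SNR₂ ω)) ≤ C₁ ω + 1 / 2 := by
    intro ω
    have hpos : (0:ℝ) < 1 + SNR₁ ω + SNR₂ ω := by linarith [h1 ω, h2 ω]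
    have h1p : (0:ℝ) < 1 + SNR₁ ω := by linarith [h1 ω]
    have e1 : Real.logb 2 (Real.sqrt (1 + SNR₁ ω + SNR₂ ω))
        = (1/2 : ℝ) * Real.logb 2 (1 + SNR₁ ω + SNR₂ ω) := by
      rw [Real.logb, Real.log_sqrt hpos.le, Real.logb]; ring
    rw [e1]
    have h2' : Real.logb 2 (1 + SNR₁ ω + SNR₂ ω) ≤ Real.logb 2 (2 * (1 + SNR₁ ω)) :=
      (Real.logb_le_logb one_lt_two hpos (by linarith [h1 ω])).mpr (by linarith [h21 ω, h1 ω])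
    have e2 : Real.logb 2 (2 * (1 + SNR₁ ω)) = 1 + Real.logb 2 (1 + SNR₁ ω) := by
      rw [Real.logb_mul two_ne_zero (ne_of_gt h1p), Real.logb_self_eq_one] <;> norm_num
    simp only [hC₁def]
    nlinarith [h2', e2]
  have hEsum : expec p (fun ω => Real.logb 2 (Real.sqrt (1 + SNR₁ ω + SNR₂ ω)))
      ≤ expec p C₁ + 1 / 2 := by
    have := emono _ _ hsumpt
    calc expec p (fun ω => Real.logb 2 (Real.sqrt (1 + SNR₁ ω + SNR₂ ω)))
        ≤ expec p (fun ω => C₁ ω + 1/2) := this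
      _ = expec p C₁ + 1/2 := by
          simp only [expec, mul_add]
          rw [Finset.sum_add_distrib, ← Finset.sum_mul, hp1]; ring
  have hEmaxeq : expec p (fun ω => ((max (M₁ ω) (M₂ ω) : ℕ) : ℝ))
      = expec p (fun ω => (M₁ ω : ℝ)) := by
    unfold expec
    exact Finset.sum_congr rfl fun ω _ => by simp [max_eq_left (hM21 ω)]
  have e1 : R₁ ≤ expec p (fun ω => (M₁ ω : ℝ)) := le_trans hR₁ hE1
  have e2 : R₂ ≤ expec p (fun ω => (M₂ ω : ℝ)) := le_trans hR₂ hE2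
  have e2' : R₂ ≤ expec p (fun ω => (M₁ ω : ℝ)) := le_trans hR₂ (le_trans hE21 hE1)
  have esum : R₁ + R₂ ≤ expec p (fun ω => (M₁ ω : ℝ)) + 1/2 :=
    le_trans hRs (le_trans hEsum (by linarith))
  refine ⟨?_, ?_, ?_⟩
  · rcases max_cases (R₁ - 1) 0 with ⟨h, _⟩ | ⟨h, _⟩ <;> rw [h] <;> linarith
  · rcases max_cases (R₂ - 3/2) 0 with ⟨h, _⟩ | ⟨h, _⟩ <;> rw [h] <;> linarith
  · rw [hEmaxeq]
    rcases max_cases (R₁ - 1) 0 with ⟨ha, ha'⟩ | ⟨ha, ha'⟩ <;>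
      rcases max_cases (R₂ - 3/2) 0 with ⟨hb, hb'⟩ | ⟨hb, hb'⟩ <;>
      rw [ha, hb] <;> linarith
end

section
/- For independent uniform bits X¹,...,Xⁿ and any auxiliary random variable V, the objective H(X¹...X^{m₁}|V) + μ·Σ_{i} p(i)·I(V; X¹...Xⁱ) can be written as Σ_{j=1}^{m₁} [ (1−μ·q(j))·H(Xʲ|V,X¹,...,X^{j−1}) + μ·q(j)·H(Xʲ|X¹,...,X^{j−1}) ] + μ·Σ_{j=m₁+1}^{n} (Σ_{i≥j} p(i))·I(V;Xʲ|X¹,...,X^{j−1}), where q(j) = Σ_{i=j}^{n} p(i) restricted appropriately; consequently it is maximized over choices of V by taking V to determine exactly those bit levels j with μ·q(j) ≥ 1 together with levels j > m₁, yielding maximum value Σ_{j=1}^{m₁} max(1, μ·q(j)) + μ·Σ_{j=m₁+1}^{n} Σ_{i=j}^{n} p(i). -/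
open Finset

/-- The weighted-sum objective for the semi-deterministic fading broadcast channel. -/
noncomputable def bcObjective {Ω γ : Type} [Fintype Ω] [DecidableEq γ]
    (p : Ω → ℝ) (n m₁ : ℕ) (μ : ℝ) (pM : ℕ → ℝ)
    (X : Ω → Fin n → Bool) (V : Ω → γ) : ℝ :=
  condH p (fun ω => trunc n (X ω) m₁) V +
    μ * ∑ i ∈ Finset.range (n + 1), pM i * mutI p V (fun ω => trunc n (X ω) i)

/-!
By the chain rule, `H(X^{≤m₁} | V) = ∑_{j ≤ m₁} H(Xʲ | V, X^{<j})` and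
`I(V; X^{≤i}) = ∑_{j ≤ i} I(V; Xʲ | X^{<j})`. Exchanging the order of summation in
`∑ᵢ p(i) I(V; X^{≤i})` puts the weight `q(j)` on level `j`, and on the levels `j ≤ m₁` we split
`I(V; Xʲ | X^{<j}) = H(Xʲ | X^{<j}) - H(Xʲ | V, X^{<j})`. For uniform bits `H(Xʲ | X^{<j}) = 1`
and `0 ≤ H(Xʲ | V, X^{<j}) ≤ 1`, so a level `j ≤ m₁` contributes at most `max 1 (μ q(j))` and a
level `j > m₁` at most `μ q(j)`. When `V` reveals a set of bits of `X`, `H(Xʲ | V, X^{<j})` is `0`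
or `1` according to whether bit `j` is revealed, so revealing exactly the bits on which the
maximum is `μ q(j)`, and all bits above `m₁`, makes every level tight.
-/

lemma sum_mul_logb_le_sum_mul_logb_sum {ι : Type} (s : Finset ι) (f : ι → ℝ)
    (hf : ∀ a ∈ s, 0 ≤ f a) :
    ∑ a ∈ s, f a * Real.logb 2 (f a) ≤ (∑ a ∈ s, f a) * Real.logb 2 (∑ a ∈ s, f a) := by
  rw [sum_mul]
  refine sum_le_sum fun a ha => ?_
  rcases (hf a ha).eq_or_lt with h0 | h0
  · simp [← h0]
  · exact mul_le_mul_of_nonneg_left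
      (Real.logb_le_logb_of_le one_lt_two h0 (single_le_sum hf ha)) h0.le

lemma sum_mul_logb_sum_sub_le_sum_mul_logb {ι : Type} (s : Finset ι) (f : ι → ℝ)
    (hf : ∀ a ∈ s, 0 ≤ f a) (K : ℕ) (hK : #s ≤ K) :
    (∑ a ∈ s, f a) * Real.logb 2 (∑ a ∈ s, f a) - (∑ a ∈ s, f a) * Real.logb 2 K
      ≤ ∑ a ∈ s, f a * Real.logb 2 (f a) := by
  rcases s.eq_empty_or_nonempty with rfl | hs
  · simp
  set S := ∑ a ∈ s, f a
  have hS : 0 ≤ S := sum_nonneg hf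
  have hc : (0 : ℝ) < #s := by exact_mod_cast hs.card_pos
  have jensen := Real.convexOn_mul_log.map_sum_le (t := s) (w := fun _ => 1 / (#s : ℝ))
    (fun _ _ => by positivity) (by simp [hc.ne']) hf
  simp only [smul_eq_mul, ← mul_sum] at jensen
  have hlogK : S * Real.log #s ≤ S * Real.log K :=
    mul_le_mul_of_nonneg_left (Real.log_le_log hc (by exact_mod_cast hK)) hS
  have key : S * Real.log S - S * Real.log K ≤ ∑ a ∈ s, f a * Real.log (f a) := by
    have hsplit : S * Real.log (1 / #s * S) = S * Real.log S - S * Real.log #s := by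
      rcases hS.eq_or_lt with h0 | h0
      · simp [← h0]
      · rw [Real.log_mul (by positivity) h0.ne', one_div, Real.log_inv]; ring
    calc S * Real.log S - S * Real.log K
        ≤ S * Real.log (1 / #s * S) := by linarith
      _ = #s * ((1 / #s * S) * Real.log (1 / #s * S)) := by field_simp
      _ ≤ #s * (1 / #s * ∑ a ∈ s, f a * Real.log (f a)) :=
        mul_le_mul_of_nonneg_left jensen hc.le
      _ = ∑ a ∈ s, f a * Real.log (f a) := by field_simp
  simp only [Real.logb, ← mul_div_assoc, ← sum_div, ← sub_div]
  exact div_le_div_of_nonneg_right key (Real.log_pos one_lt_two).le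

section Entropy

variable {Ω α β γ : Type} [Fintype Ω] [DecidableEq α] [DecidableEq β] [DecidableEq γ]
  (p : Ω → ℝ)

lemma probOf_nonneg (hp : ∀ ω, 0 ≤ p ω) (Z : Ω → α) (a : α) : 0 ≤ probOf p Z a :=
  sum_nonneg fun ω _ => hp ω

lemma sum_probOf (Z : Ω → α) : ∑ a ∈ univ.image Z, probOf p Z a = ∑ ω, p ω :=
  sum_fiberwise_of_maps_to (fun ω _ => mem_image_of_mem Z (mem_univ ω)) p

lemma probOf_comp (Z : Ω → α) (g : α → β) (b : β) :
    probOf p (fun ω => g (Z ω)) b = ∑ a ∈ (univ.image Z).filter (g · = b), probOf p Z a := by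
  unfold probOf
  rw [← sum_fiberwise_of_maps_to (g := Z) (t := (univ.image Z).filter (g · = b))]
  · refine sum_congr rfl fun a ha => sum_congr ?_ fun _ _ => rfl
    ext ω
    simp only [mem_filter, mem_univ, true_and]
    exact ⟨fun h => h.2, fun h => ⟨h ▸ (mem_filter.mp ha).2, h⟩⟩
  · intro ω hω
    simp only [mem_filter, mem_univ, true_and, mem_image] at hω ⊢
    exact ⟨⟨ω, rfl⟩, hω⟩

lemma entH_eq_sum_fiberwise (Z : Ω → α) (g : α → β) :
    entH p Z = -∑ b ∈ univ.image (fun ω => g (Z ω)),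
      ∑ a ∈ (univ.image Z).filter (g · = b), probOf p Z a * Real.logb 2 (probOf p Z a) := by
  unfold entH
  rw [sum_fiberwise_of_maps_to]
  intro a ha
  obtain ⟨ω, -, rfl⟩ := mem_image.mp ha
  exact mem_image_of_mem _ (mem_univ ω)

lemma entH_eq_of_comp_of_comp (Z₁ : Ω → α) (Z₂ : Ω → β) (g : β → α) (f : α → β)
    (hg : ∀ ω, Z₁ ω = g (Z₂ ω)) (hf : ∀ ω, f (Z₁ ω) = Z₂ ω) : entH p Z₁ = entH p Z₂ := by
  obtain rfl : Z₁ = fun ω => g (Z₂ ω) := funext hg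
  simp only at hf
  have hprob : ∀ ω₀, probOf p (fun ω => g (Z₂ ω)) (g (Z₂ ω₀)) = probOf p Z₂ (Z₂ ω₀) := by
    intro ω₀
    unfold probOf
    congr 1
    ext ω
    simp only [mem_filter, mem_univ, true_and]
    exact ⟨fun h => by rw [← hf ω, ← hf ω₀, h], fun h => by rw [h]⟩
  have hinj : Set.InjOn g (univ.image Z₂) := by
    intro a ha b hb hab
    obtain ⟨ω₁, -, rfl⟩ := mem_image.mp ha
    obtain ⟨ω₂, -, rfl⟩ := mem_image.mp hb
    rw [← hf ω₁, ← hf ω₂, hab]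
  unfold entH
  rw [show univ.image (fun ω => g (Z₂ ω)) = (univ.image Z₂).image g by rw [image_image]; rfl,
    sum_image hinj]
  congr 1
  refine sum_congr rfl fun a ha => ?_
  obtain ⟨ω, -, rfl⟩ := mem_image.mp ha
  rw [hprob]

lemma entH_prod_comm (Y : Ω → α) (Z : Ω → β) :
    entH p (fun ω => (Y ω, Z ω)) = entH p (fun ω => (Z ω, Y ω)) :=
  entH_eq_of_comp_of_comp p _ _ Prod.swap Prod.swap (fun _ => rfl) (fun _ => rfl)

lemma entH_const (hp1 : ∑ ω, p ω = 1) (c : α) : entH p (fun _ => c) = 0 := by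
  have hc : probOf p (fun _ => c) c = 1 := by simp [probOf, hp1]
  by_cases hΩ : Nonempty Ω
  · simp [entH, image_const univ_nonempty, hc]
  · simp [entH, univ_eq_empty_iff.mpr (not_nonempty_iff.mp hΩ)]

lemma entH_eq_neg_logb_of_probOf_eq {Ω α : Type} [Fintype Ω] [DecidableEq α] (p : Ω → ℝ)
    (hp1 : ∑ ω, p ω = 1) (Z : Ω → α) (c : ℝ) (hc : ∀ ω, probOf p Z (Z ω) = c) :
    entH p Z = -Real.logb 2 c := by
  have hconst : ∀ a ∈ univ.image Z, probOf p Z a = c := by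
    intro a ha
    obtain ⟨ω, -, rfl⟩ := mem_image.mp ha
    exact hc ω
  have hmass : #(univ.image Z) * c = 1 := by
    rw [← hp1, ← sum_probOf p Z, sum_congr rfl hconst, sum_const, nsmul_eq_mul]
  rw [entH, sum_congr rfl fun a ha => by rw [hconst a ha], sum_const, nsmul_eq_mul, ← mul_assoc,
    hmass, one_mul]

lemma entH_comp_le (hp : ∀ ω, 0 ≤ p ω) (Z : Ω → α) (g : α → β) :
    entH p (fun ω => g (Z ω)) ≤ entH p Z := by
  rw [entH_eq_sum_fiberwise p Z g, entH, neg_le_neg_iff]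
  refine sum_le_sum fun b _ => ?_
  rw [probOf_comp]
  exact sum_mul_logb_le_sum_mul_logb_sum _ _ fun a _ => probOf_nonneg p hp Z a

lemma entH_le_entH_comp_add_logb (hp : ∀ ω, 0 ≤ p ω) (hp1 : ∑ ω, p ω = 1)
    (Z : Ω → α) (g : α → β) (K : ℕ) (hK : ∀ b, #((univ.image Z).filter (g · = b)) ≤ K) :
    entH p Z ≤ entH p (fun ω => g (Z ω)) + Real.logb 2 K := by
  have hfiber : ∀ b, probOf p (fun ω => g (Z ω)) b * Real.logb 2 (probOf p (fun ω => g (Z ω)) b)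
      - probOf p (fun ω => g (Z ω)) b * Real.logb 2 K
      ≤ ∑ a ∈ (univ.image Z).filter (g · = b), probOf p Z a * Real.logb 2 (probOf p Z a) := by
    intro b
    rw [probOf_comp]
    exact sum_mul_logb_sum_sub_le_sum_mul_logb _ _ (fun a _ => probOf_nonneg p hp Z a) K (hK b)
  have hsum := sum_le_sum fun b (_ : b ∈ univ.image fun ω => g (Z ω)) => hfiber b
  rw [sum_sub_distrib, ← sum_mul, sum_probOf, hp1, one_mul] at hsum
  rw [entH_eq_sum_fiberwise p Z g, entH]
  linarith

lemma condH_nonneg (hp : ∀ ω, 0 ≤ p ω) (Y : Ω → α) (M : Ω → β) : 0 ≤ condH p Y M :=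
  sub_nonneg.mpr (entH_comp_le p hp (fun ω => (Y ω, M ω)) Prod.snd)

lemma condH_le_logb_card [Fintype α] (hp : ∀ ω, 0 ≤ p ω) (hp1 : ∑ ω, p ω = 1)
    (Y : Ω → α) (M : Ω → β) : condH p Y M ≤ Real.logb 2 (Fintype.card α) := by
  have hK : ∀ b, #((univ.image fun ω => (Y ω, M ω)).filter (Prod.snd · = b))
      ≤ Fintype.card α := by
    intro b
    refine card_le_card_of_injOn Prod.fst (fun _ _ => mem_univ _) fun x hx y hy hxy => ?_
    rw [mem_coe, mem_filter] at hx hy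
    exact Prod.ext hxy (hx.2.trans hy.2.symm)
  have := entH_le_entH_comp_add_logb p hp hp1 (fun ω => (Y ω, M ω)) Prod.snd _ hK
  rw [condH]
  linarith

lemma condH_le_one_of_bool {Ω β : Type} [Fintype Ω] [DecidableEq β] {p : Ω → ℝ}
    (hp : ∀ ω, 0 ≤ p ω) (hp1 : ∑ ω, p ω = 1) (Y : Ω → Bool) (M : Ω → β) :
    condH p Y M ≤ 1 := by
  simpa [Real.logb_self_eq_one one_lt_two] using condH_le_logb_card p hp hp1 Y M

lemma condMI_eq_condH_sub_condH (X : Ω → α) (Y : Ω → β) (Z : Ω → γ) :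
    condMI p X Y Z = condH p Y Z - condH p Y (fun ω => (X ω, Z ω)) := by
  have hswap : entH p (fun ω => (X ω, Y ω, Z ω)) = entH p (fun ω => (Y ω, X ω, Z ω)) :=
    entH_eq_of_comp_of_comp p _ _ (fun t => (t.2.1, t.1, t.2.2)) (fun t => (t.2.1, t.1, t.2.2))
      (fun _ => rfl) (fun _ => rfl)
  rw [condMI, condH, condH, hswap]
  ring

lemma condMI_le_condH (hp : ∀ ω, 0 ≤ p ω) (X : Ω → α) (Y : Ω → β) (Z : Ω → γ) :
    condMI p X Y Z ≤ condH p Y Z := by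
  rw [condMI_eq_condH_sub_condH]
  linarith [condH_nonneg p hp Y (fun ω => (X ω, Z ω))]

end Entropy

section Prefix

variable {n : ℕ}

lemma trunc_zero (x : Fin n → Bool) : trunc n x 0 = fun _ => false := by
  funext i; simp [trunc]

lemma trunc_trunc (x : Fin n → Bool) {m j : ℕ} (h : m ≤ j) :
    trunc n (trunc n x j) m = trunc n x m := by
  funext i
  simp only [trunc]
  split_ifs <;> first | rfl | omega

lemma bitOf_trunc (x : Fin n → Bool) {j : ℕ} (hj : 1 ≤ j) :
    bitOf n (trunc n x j) j = bitOf n x j := by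
  unfold bitOf trunc
  split_ifs with h1 h2
  · rfl
  · simp at h2; omega
  · rfl

lemma ite_bitOf_trunc (x : Fin n → Bool) {j : ℕ} (hj : 1 ≤ j) :
    (fun i : Fin n => if i.val = j - 1 then bitOf n x j else trunc n x (j - 1) i)
      = trunc n x j := by
  funext i
  by_cases hi : i.val = j - 1
  · have hlt : j - 1 < n := hi ▸ i.isLt
    obtain rfl : ⟨j - 1, hlt⟩ = i := Fin.ext hi.symm
    simp [bitOf, trunc, hlt, show j - 1 < j by omega]
  · have hlt : i.val < j - 1 ↔ i.val < j := by omega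
    simp [trunc, hi, hlt]

end Prefix

lemma sum_Icc_sub_pred (f : ℕ → ℝ) (m : ℕ) :
    ∑ j ∈ Icc 1 m, (f j - f (j - 1)) = f m - f 0 := by
  induction m with
  | zero => simp
  | succ k ih => rw [sum_Icc_succ_top (by omega), ih, Nat.add_sub_cancel]; ring

section ChainRule

variable {Ω γ : Type} [Fintype Ω] [DecidableEq γ] {n : ℕ} (p : Ω → ℝ) (X : Ω → Fin n → Bool)
  (V : Ω → γ)

lemma entH_bitOf_prod_trunc {j : ℕ} (hj : 1 ≤ j) :
    entH p (fun ω => (bitOf n (X ω) j, V ω, trunc n (X ω) (j - 1)))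
      = entH p (fun ω => (V ω, trunc n (X ω) j)) :=
  entH_eq_of_comp_of_comp p _ _ (fun a => (bitOf n a.2 j, a.1, trunc n a.2 (j - 1)))
    (fun a => (a.2.1, fun i => if i.val = j - 1 then a.1 else a.2.2 i))
    (fun ω => by simp only [bitOf_trunc _ hj, trunc_trunc _ (Nat.sub_le j 1)])
    (fun ω => by simp only [ite_bitOf_trunc _ hj])

lemma entH_bitOf_trunc {j : ℕ} (hj : 1 ≤ j) :
    entH p (fun ω => (bitOf n (X ω) j, trunc n (X ω) (j - 1)))
      = entH p (fun ω => trunc n (X ω) j) :=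
  entH_eq_of_comp_of_comp p _ _ (fun t => (bitOf n t j, trunc n t (j - 1)))
    (fun a => fun i => if i.val = j - 1 then a.1 else a.2 i)
    (fun ω => by simp only [bitOf_trunc _ hj, trunc_trunc _ (Nat.sub_le j 1)])
    (fun ω => ite_bitOf_trunc _ hj)

lemma entH_prod_trunc_zero : entH p (fun ω => (V ω, trunc n (X ω) 0)) = entH p V :=
  entH_eq_of_comp_of_comp p _ _ (fun v => (v, fun _ => false)) Prod.fst
    (fun ω => by rw [trunc_zero]) (fun _ => rfl)

lemma condH_trunc_eq_sum_condH_bitOf (m : ℕ) :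
    condH p (fun ω => trunc n (X ω) m) V
      = ∑ j ∈ Icc 1 m,
          condH p (fun ω => bitOf n (X ω) j) (fun ω => (V ω, trunc n (X ω) (j - 1))) := by
  rw [sum_congr rfl fun j hj => by rw [condH, entH_bitOf_prod_trunc p X V (mem_Icc.mp hj).1],
    sum_Icc_sub_pred (fun j => entH p fun ω => (V ω, trunc n (X ω) j)), condH, entH_prod_comm,
    entH_prod_trunc_zero]

lemma mutI_trunc_eq_sum_condMI_bitOf (hp1 : ∑ ω, p ω = 1) (m : ℕ) :
    mutI p V (fun ω => trunc n (X ω) m)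
      = ∑ j ∈ Icc 1 m, condMI p V (fun ω => bitOf n (X ω) j) (fun ω => trunc n (X ω) (j - 1)) := by
  have hstep : ∀ j ∈ Icc 1 m,
      condMI p V (fun ω => bitOf n (X ω) j) (fun ω => trunc n (X ω) (j - 1))
        = (entH p (fun ω => trunc n (X ω) j) - entH p (fun ω => trunc n (X ω) (j - 1)))
          - (entH p (fun ω => (V ω, trunc n (X ω) j))
            - entH p (fun ω => (V ω, trunc n (X ω) (j - 1)))) := by
    intro j hj
    rw [condMI_eq_condH_sub_condH, condH, condH, entH_bitOf_trunc p X (mem_Icc.mp hj).1,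
      entH_bitOf_prod_trunc p X V (mem_Icc.mp hj).1]
  rw [sum_congr rfl hstep, sum_sub_distrib,
    sum_Icc_sub_pred (fun j => entH p fun ω => trunc n (X ω) j),
    sum_Icc_sub_pred (fun j => entH p fun ω => (V ω, trunc n (X ω) j)), entH_prod_trunc_zero]
  simp only [trunc_zero, entH_const p hp1, mutI]
  ring

end ChainRule

lemma sum_range_mul_sum_Icc_eq (n : ℕ) (w c : ℕ → ℝ) :
    ∑ i ∈ range (n + 1), w i * ∑ j ∈ Icc 1 i, c j
      = ∑ j ∈ Icc 1 n, (∑ i ∈ Icc j n, w i) * c j := by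
  simp_rw [mul_sum, sum_mul]
  exact sum_comm' fun i j => by simp only [mem_range, mem_Icc]; omega

lemma sum_Icc_one_eq_add_sum_Icc {m n : ℕ} (h : m ≤ n) (f : ℕ → ℝ) :
    ∑ j ∈ Icc 1 n, f j = ∑ j ∈ Icc 1 m, f j + ∑ j ∈ Icc (m + 1) n, f j := by
  rw [← sum_union (disjoint_left.mpr fun j hj hj' => by
    simp only [mem_Icc] at hj hj'; omega)]
  congr 1
  ext j
  simp only [mem_Icc, mem_union]
  omega

def mask (n : ℕ) (S : Finset (Fin n)) (x : Fin n → Bool) : Fin n → Bool :=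
  fun i => if i ∈ S then x i else false

section Mask

variable {n : ℕ}

lemma trunc_eq_mask (x : Fin n → Bool) (m : ℕ) :
    trunc n x m = mask n (univ.filter fun i : Fin n => i.val < m) x := by
  funext i; simp [trunc, mask]

lemma mask_mask_of_subset {S T : Finset (Fin n)} (hST : S ⊆ T) (x : Fin n → Bool) :
    mask n S (mask n T x) = mask n S x := by
  funext i
  by_cases hi : i ∈ S
  · simp [mask, hi, hST hi]
  · simp [mask, hi]

lemma mask_or_mask (S T : Finset (Fin n)) (x : Fin n → Bool) :
    (fun i => mask n S x i || mask n T x i) = mask n (S ∪ T) x := by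
  funext i
  by_cases hS : i ∈ S <;> by_cases hT : i ∈ T <;> simp [mask, hS, hT]

lemma card_filter_mask_eq (S : Finset (Fin n)) (x₀ : Fin n → Bool) :
    #(univ.filter fun x => mask n S x = mask n S x₀) = 2 ^ (n - #S) := by
  have : univ.filter (fun x => mask n S x = mask n S x₀)
      = Fintype.piFinset fun i => if i ∈ S then {x₀ i} else univ := by
    ext x
    simp only [mem_filter, mem_univ, true_and, Fintype.mem_piFinset, funext_iff, mask]
    refine forall_congr' fun i => ?_
    by_cases hi : i ∈ S <;> simp [hi]
  rw [this, Fintype.card_piFinset]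
  simp [apply_ite card, prod_ite, filter_not, card_univ_sdiff]

end Mask

section UniformBits

variable {Ω : Type} [Fintype Ω] {n : ℕ} {p : Ω → ℝ} {X : Ω → Fin n → Bool}

lemma image_eq_univ_of_uniform (hX : ∀ x, probOf p X x = (1 / 2 : ℝ) ^ n) :
    univ.image X = univ := by
  refine eq_univ_of_forall fun x => ?_
  by_contra hx
  have : probOf p X x = 0 := sum_eq_zero fun ω hω => absurd (mem_image_of_mem X (mem_univ ω))
    (by simpa [(mem_filter.mp hω).2] using hx)
  rw [hX] at this
  exact pow_ne_zero n (by norm_num) this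

lemma probOf_mask (hX : ∀ x, probOf p X x = (1 / 2 : ℝ) ^ n) (S : Finset (Fin n))
    (x₀ : Fin n → Bool) :
    probOf p (fun ω => mask n S (X ω)) (mask n S x₀) = (1 / 2 : ℝ) ^ #S := by
  have hS : #S ≤ n := by simpa using card_le_univ S
  rw [probOf_comp, image_eq_univ_of_uniform hX, sum_congr rfl fun x _ => hX x, sum_const,
    card_filter_mask_eq, nsmul_eq_mul]
  have hsplit : (1 / 2 : ℝ) ^ n = (1 / 2) ^ (n - #S) * (1 / 2) ^ #S := by
    rw [← pow_add, Nat.sub_add_cancel hS]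
  rw [hsplit, Nat.cast_pow, ← mul_assoc, ← mul_pow]
  norm_num

lemma entH_mask (hp1 : ∑ ω, p ω = 1) (hX : ∀ x, probOf p X x = (1 / 2 : ℝ) ^ n)
    (S : Finset (Fin n)) : entH p (fun ω => mask n S (X ω)) = #S := by
  rw [entH_eq_neg_logb_of_probOf_eq p hp1 _ _ fun ω => probOf_mask hX S (X ω), Real.logb_pow,
    one_div, Real.logb_inv, Real.logb_self_eq_one one_lt_two]
  ring

lemma entH_mask_prod_mask (hp1 : ∑ ω, p ω = 1) (hX : ∀ x, probOf p X x = (1 / 2 : ℝ) ^ n)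
    (S T : Finset (Fin n)) :
    entH p (fun ω => (mask n S (X ω), mask n T (X ω))) = #(S ∪ T) := by
  rw [← entH_mask hp1 hX (S ∪ T)]
  exact entH_eq_of_comp_of_comp p _ _ (fun y => (mask n S y, mask n T y))
    (fun a i => a.1 i || a.2 i)
    (fun ω => by simp only [mask_mask_of_subset subset_union_left,
      mask_mask_of_subset subset_union_right])
    (fun ω => mask_or_mask S T (X ω))

lemma entH_trunc (hp1 : ∑ ω, p ω = 1) (hX : ∀ x, probOf p X x = (1 / 2 : ℝ) ^ n) {j : ℕ}
    (hj : j ≤ n) : entH p (fun ω => trunc n (X ω) j) = j := by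
  simp_rw [trunc_eq_mask, entH_mask hp1 hX, Fin.card_filter_val_lt, min_eq_right hj]

lemma condH_bitOf_trunc (hp1 : ∑ ω, p ω = 1) (hX : ∀ x, probOf p X x = (1 / 2 : ℝ) ^ n)
    {j : ℕ} (h1 : 1 ≤ j) (hjn : j ≤ n) :
    condH p (fun ω => bitOf n (X ω) j) (fun ω => trunc n (X ω) (j - 1)) = 1 := by
  rw [condH, entH_bitOf_trunc p X h1, entH_trunc hp1 hX hjn, entH_trunc hp1 hX (by omega),
    Nat.cast_sub h1]
  ring

lemma filter_val_lt_eq_insert {j : ℕ} (h1 : 1 ≤ j) (hjn : j ≤ n) :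
    (univ.filter fun i : Fin n => i.val < j)
      = insert ⟨j - 1, by omega⟩ (univ.filter fun i : Fin n => i.val < j - 1) := by
  ext i
  simp only [mem_filter, mem_univ, true_and, mem_insert, Fin.ext_iff]
  omega

lemma condH_bitOf_mask_prod_trunc (hp1 : ∑ ω, p ω = 1)
    (hX : ∀ x, probOf p X x = (1 / 2 : ℝ) ^ n) (S : Finset (Fin n)) {j : ℕ} (h1 : 1 ≤ j)
    (hjn : j ≤ n) :
    condH p (fun ω => bitOf n (X ω) j) (fun ω => (mask n S (X ω), trunc n (X ω) (j - 1)))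
      = if (⟨j - 1, by omega⟩ : Fin n) ∈ S then 0 else 1 := by
  rw [condH, entH_bitOf_prod_trunc p X _ h1]
  simp_rw [trunc_eq_mask, entH_mask_prod_mask hp1 hX]
  rw [filter_val_lt_eq_insert h1 hjn, union_insert, card_insert_eq_ite]
  have hmem : (⟨j - 1, by omega⟩ : Fin n) ∈ S ∪ (univ.filter fun i : Fin n => i.val < j - 1)
      ↔ (⟨j - 1, by omega⟩ : Fin n) ∈ S := by simp
  simp only [hmem]
  split_ifs <;> push_cast <;> ring

end UniformBits

lemma one_sub_mul_add_le_max {h c : ℝ} (h0 : 0 ≤ h) (h1 : h ≤ 1) :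
    (1 - c) * h + c ≤ max 1 c := by
  rcases le_total c 1 with hc1 | hc1
  · exact le_max_of_le_left (by nlinarith)
  · exact le_max_of_le_right (by nlinarith)

section Objective

variable {Ω γ : Type} [Fintype Ω] [DecidableEq γ] {n m₁ : ℕ} {p : Ω → ℝ}
  {X : Ω → Fin n → Bool} {μ : ℝ} {pM q : ℕ → ℝ}

lemma bcObjective_eq_levelwise (hm : m₁ ≤ n) (hp1 : ∑ ω, p ω = 1)
    (hq : ∀ j, q j = ∑ i ∈ Icc j n, pM i) (V : Ω → γ) :
    bcObjective p n m₁ μ pM X V =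
      (∑ j ∈ Icc 1 m₁,
        ((1 - μ * q j) *
            condH p (fun ω => bitOf n (X ω) j) (fun ω => (V ω, trunc n (X ω) (j - 1)))
          + μ * q j *
            condH p (fun ω => bitOf n (X ω) j) (fun ω => trunc n (X ω) (j - 1)))) +
      μ * ∑ j ∈ Icc (m₁ + 1) n,
        q j * condMI p V (fun ω => bitOf n (X ω) j) (fun ω => trunc n (X ω) (j - 1)) := by
  simp_rw [bcObjective, condH_trunc_eq_sum_condH_bitOf, mutI_trunc_eq_sum_condMI_bitOf p X V hp1]
  rw [sum_range_mul_sum_Icc_eq, sum_Icc_one_eq_add_sum_Icc hm]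
  simp_rw [← hq]
  rw [mul_add, ← add_assoc, mul_sum, ← sum_add_distrib]
  congr 1
  refine sum_congr rfl fun j _ => ?_
  rw [condMI_eq_condH_sub_condH]
  ring

lemma bcObjective_le (hm : m₁ ≤ n) (hp : ∀ ω, 0 ≤ p ω) (hp1 : ∑ ω, p ω = 1)
    (hX : ∀ x, probOf p X x = (1 / 2 : ℝ) ^ n) (hμ : 0 ≤ μ) (hpM : ∀ i, 0 ≤ pM i)
    (hq : ∀ j, q j = ∑ i ∈ Icc j n, pM i) (V : Ω → γ) :
    bcObjective p n m₁ μ pM X V ≤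
      (∑ j ∈ Icc 1 m₁, max 1 (μ * q j)) + μ * ∑ j ∈ Icc (m₁ + 1) n, ∑ i ∈ Icc j n, pM i := by
  have hq0 : ∀ j, 0 ≤ q j := fun j => hq j ▸ sum_nonneg fun i _ => hpM i
  rw [bcObjective_eq_levelwise hm hp1 hq]
  gcongr with j hj j hj
  · obtain ⟨h1, hjm⟩ := mem_Icc.mp hj
    rw [condH_bitOf_trunc hp1 hX h1 (hjm.trans hm), mul_one]
    exact one_sub_mul_add_le_max (condH_nonneg p hp _ _) (condH_le_one_of_bool hp hp1 _ _)
  · obtain ⟨h1, hjn⟩ := mem_Icc.mp hj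
    rw [← hq j]
    refine mul_le_of_le_one_right (hq0 j) ((condMI_le_condH p hp _ _ _).trans ?_)
    rw [condH_bitOf_trunc hp1 hX (by omega) hjn]

lemma bcObjective_mask_eq (hm : m₁ ≤ n) (hp1 : ∑ ω, p ω = 1)
    (hX : ∀ x, probOf p X x = (1 / 2 : ℝ) ^ n) (hq : ∀ j, q j = ∑ i ∈ Icc j n, pM i)
    (S : Finset (Fin n)) (hlow : ∀ i : Fin n, i.val < m₁ → (i ∈ S ↔ 1 ≤ μ * q (i.val + 1)))
    (hhigh : ∀ i : Fin n, m₁ ≤ i.val → i ∈ S) :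
    bcObjective p n m₁ μ pM X (fun ω => mask n S (X ω)) =
      (∑ j ∈ Icc 1 m₁, max 1 (μ * q j)) + μ * ∑ j ∈ Icc (m₁ + 1) n, ∑ i ∈ Icc j n, pM i := by
  rw [bcObjective_eq_levelwise hm hp1 hq]
  congr 1
  · refine sum_congr rfl fun j hj => ?_
    obtain ⟨h1, hjm⟩ := mem_Icc.mp hj
    have hS := hlow ⟨j - 1, by omega⟩ (by simp only; omega)
    simp only [Nat.sub_add_cancel h1] at hS
    rw [condH_bitOf_mask_prod_trunc hp1 hX S h1 (hjm.trans hm),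
      condH_bitOf_trunc hp1 hX h1 (hjm.trans hm)]
    split_ifs with hmem
    · rw [max_eq_right (hS.mp hmem)]; ring
    · rw [max_eq_left (le_of_not_ge (mt hS.mpr hmem))]; ring
  · refine congrArg (μ * ·) (sum_congr rfl fun j hj => ?_)
    obtain ⟨h1, hjn⟩ := mem_Icc.mp hj
    rw [condMI_eq_condH_sub_condH, condH_bitOf_mask_prod_trunc hp1 hX S (by omega) hjn,
      if_pos (hhigh _ (by simp only; omega)), condH_bitOf_trunc hp1 hX (by omega) hjn, hq j]
    ring

end Objective

theorem stmt11_general (Ω γ : Type) [Fintype Ω] [DecidableEq γ] (n m₁ : ℕ) (hm : m₁ ≤ n)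
    (p : Ω → ℝ) (hp : ∀ ω, 0 ≤ p ω) (hp1 : ∑ ω, p ω = 1)
    (X : Ω → Fin n → Bool) (hXunif : ∀ x, probOf p X x = (1 / 2 : ℝ) ^ n)
    (μ : ℝ) (hμ : 0 ≤ μ)
    (pM : ℕ → ℝ) (hpM : ∀ i, 0 ≤ pM i)
    (q : ℕ → ℝ) (hq : ∀ j, q j = ∑ i ∈ Finset.Icc j n, pM i)
    (V : Ω → γ) :
    -- the objective can be rewritten bit-level by bit-level:
    (bcObjective p n m₁ μ pM X V =
      (∑ j ∈ Finset.Icc 1 m₁,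
        ((1 - μ * q j) *
            condH p (fun ω => bitOf n (X ω) j) (fun ω => (V ω, trunc n (X ω) (j - 1)))
          + μ * q j *
            condH p (fun ω => bitOf n (X ω) j) (fun ω => trunc n (X ω) (j - 1)))) +
      μ * ∑ j ∈ Finset.Icc (m₁ + 1) n,
        q j * condMI p V (fun ω => bitOf n (X ω) j) (fun ω => trunc n (X ω) (j - 1))) ∧
    -- it is upper bounded by the claimed maximum value:
    (bcObjective p n m₁ μ pM X V ≤
      (∑ j ∈ Finset.Icc 1 m₁, max 1 (μ * q j)) +
        μ * ∑ j ∈ Finset.Icc (m₁ + 1) n, ∑ i ∈ Finset.Icc j n, pM i) ∧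
    -- and the maximum is attained by a V determining exactly the levels j ≤ m₁ with
    -- μ·q(j) ≥ 1 together with the levels j > m₁:
    (∃ V' : Ω → Fin n → Bool,
      (∀ ω, V' ω = fun i : Fin n =>
        if (1 ≤ μ * q (i.val + 1) ∧ i.val + 1 ≤ m₁) ∨ m₁ < i.val + 1 then X ω i else false) ∧
      bcObjective p n m₁ μ pM X V' =
        (∑ j ∈ Finset.Icc 1 m₁, max 1 (μ * q j)) +
          μ * ∑ j ∈ Finset.Icc (m₁ + 1) n, ∑ i ∈ Finset.Icc j n, pM i) := by
  refine ⟨bcObjective_eq_levelwise hm hp1 hq V,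
    bcObjective_le hm hp hp1 hXunif hμ hpM hq V, ?_⟩
  let S : Finset (Fin n) :=
    univ.filter fun i => (1 ≤ μ * q (i.val + 1) ∧ i.val + 1 ≤ m₁) ∨ m₁ < i.val + 1
  refine ⟨fun ω => mask n S (X ω), fun ω => funext fun i => by simp [S, mask],
    bcObjective_mask_eq hm hp1 hXunif hq S (fun i hi => ?_) (fun i hi => ?_)⟩
  · simp only [S, mem_filter, mem_univ, true_and]
    constructor
    · rintro (⟨h, -⟩ | h)
      · exact h
      · omega
    · exact fun h => Or.inl ⟨h, hi⟩
  · simp only [S, mem_filter, mem_univ, true_and]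
    omega

theorem stmt11 (Ω γ : Type) [Fintype Ω] [DecidableEq γ] (n m₁ : ℕ) (hm : m₁ ≤ n)
    (p : Ω → ℝ) (hp : ∀ ω, 0 ≤ p ω) (hp1 : ∑ ω, p ω = 1)
    (X : Ω → Fin n → Bool) (hXunif : ∀ x, probOf p X x = (1 / 2 : ℝ) ^ n)
    (μ : ℝ) (hμ : 0 ≤ μ)
    (pM : ℕ → ℝ) (hpM : ∀ i, 0 ≤ pM i) (hpM1 : ∑ i ∈ Finset.range (n + 1), pM i = 1)
    (q : ℕ → ℝ) (hq : ∀ j, q j = ∑ i ∈ Finset.Icc j n, pM i)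
    (V : Ω → γ) :
    -- the objective can be rewritten bit-level by bit-level:
    (bcObjective p n m₁ μ pM X V =
      (∑ j ∈ Finset.Icc 1 m₁,
        ((1 - μ * q j) *
            condH p (fun ω => bitOf n (X ω) j) (fun ω => (V ω, trunc n (X ω) (j - 1)))
          + μ * q j *
            condH p (fun ω => bitOf n (X ω) j) (fun ω => trunc n (X ω) (j - 1)))) +
      μ * ∑ j ∈ Finset.Icc (m₁ + 1) n,
        q j * condMI p V (fun ω => bitOf n (X ω) j) (fun ω => trunc n (X ω) (j - 1))) ∧
    -- it is upper bounded by the claimed maximum value: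
    (bcObjective p n m₁ μ pM X V ≤
      (∑ j ∈ Finset.Icc 1 m₁, max 1 (μ * q j)) +
        μ * ∑ j ∈ Finset.Icc (m₁ + 1) n, ∑ i ∈ Finset.Icc j n, pM i) ∧
    -- and the maximum is attained by a V determining exactly the levels j ≤ m₁ with
    -- μ·q(j) ≥ 1 together with the levels j > m₁:
    (∃ V' : Ω → Fin n → Bool,
      (∀ ω, V' ω = fun i : Fin n =>
        if (1 ≤ μ * q (i.val + 1) ∧ i.val + 1 ≤ m₁) ∨ m₁ < i.val + 1 then X ω i else false) ∧
      bcObjective p n m₁ μ pM X V' =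
        (∑ j ∈ Finset.Icc 1 m₁, max 1 (μ * q j)) +
          μ * ∑ j ∈ Finset.Icc (m₁ + 1) n, ∑ i ∈ Finset.Icc j n, pM i) :=
  stmt11_general Ω γ n m₁ hm p hp hp1 X hXunif μ hμ pM hpM q hq V
end
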